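/- Let Λ = Z_p[[T]], and let 0 → M → N → N/M → 0 be an exact sequence of Λ-modules with M free and N containing no nonzero finite Λ-submodule. Then N/M contains no nonzero finite Λ-submodule. -/

import Mathlib

/-! A finite `Λ`-module is killed by some `p ^ n` and some `X ^ m`, both lying in the Jacobson
radical. If `y ∈ N` maps into a finite `S ≤ N ⧸ M`, then `a = p ^ n • y` and `b = X ^ m • y` lie
in `M` and satisfy `X ^ m • a = p ^ n • b`. Since `p ^ n` is coprime to `X ^ m` and `M` is free,
`a = p ^ n • c` with `c ∈ M`, so `y - c` is `p ^ n`-torsion. As `M` is torsion-free, the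
`p ^ n`-torsion of the preimage of `S` embeds into `S`; it is a finite submodule of `N`, hence
zero, and `y = c ∈ M`. -/

open PowerSeries Submodule

theorem exists_pow_smul_eq_zero_of_mem_jacobson_bot {R W : Type*} [CommRing R] [AddCommGroup W]
    [Module R W] [Finite W] {r : R} (hr : r ∈ (⊥ : Ideal R).jacobson) :
    ∃ n : ℕ, ∀ w : W, r ^ n • w = 0 := by
  -- `r ^ i` and `r ^ j` act alike for some `i < j`, and `1 - r ^ (j - i)` is a unit
  obtain ⟨i, j, hne, heq⟩ :=
    Finite.exists_ne_map_eq_of_infinite fun k : ℕ => ((r ^ k • ·) : W → W)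
  wlog hij : i < j generalizing i j
  · exact this j i hne.symm heq.symm (hne.symm.lt_of_le (not_lt.mp hij))
  obtain ⟨k, rfl⟩ := Nat.exists_eq_add_of_lt hij
  have hunit : IsUnit (1 - r ^ (k + 1)) := by
    simpa [sub_eq_add_neg, add_comm] using
      Ideal.mem_jacobson_bot.mp (Ideal.pow_mem_of_mem _ hr _ k.succ_pos) (-1)
  refine ⟨i, fun w => ?_⟩
  rw [← hunit.smul_eq_zero, sub_smul, one_smul, smul_smul, ← pow_add, sub_eq_zero]
  exact (congrFun heq w).trans (by ring_nf)

theorem PowerSeries.C_dvd_of_C_dvd_X_pow_mul {R : Type*} [Semiring R] {r : R} {m : ℕ}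
    {f : R⟦X⟧} (h : C r ∣ X ^ m * f) : C r ∣ f := by
  obtain ⟨g, hg⟩ := h
  refine ⟨mk fun k => coeff (k + m) g, ?_⟩
  ext k
  simpa [coeff_X_pow_mul, coeff_C_mul] using congr(coeff (k + m) $hg)

theorem PowerSeries.mem_jacobson_bot_of_not_isUnit_constantCoeff {R : Type*} [CommRing R]
    [IsLocalRing R] {f : R⟦X⟧} (hf : ¬IsUnit (constantCoeff f)) :
    f ∈ (⊥ : Ideal R⟦X⟧).jacobson := by
  rwa [IsLocalRing.jacobson_eq_maximalIdeal ⊥ bot_ne_top, IsLocalRing.mem_maximalIdeal,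
    mem_nonunits_iff, isUnit_iff_constantCoeff]

theorem Module.Free.exists_eq_smul_of_smul_eq_smul {R F : Type*} [CommRing R] [AddCommGroup F]
    [Module R F] [Module.Free R F] {q s : R} (hqs : ∀ f : R, q ∣ s * f → q ∣ f) {a b : F}
    (h : s • a = q • b) : ∃ c, a = q • c := by
  let B := Module.Free.chooseBasis R F
  -- divide coordinatewise, taking the quotient `0` off the support of `a` to keep it finite
  have hdiv : ∀ i, ∃ c, B.repr a i = q * c ∧ (B.repr a i = 0 → c = 0) := by
    intro i
    by_cases h0 : B.repr a i = 0
    · exact ⟨0, by simp [h0]⟩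
    obtain ⟨c, hc⟩ := hqs _ ⟨B.repr b i, by simpa using congr(B.repr $h i)⟩
    exact ⟨c, hc, fun h' => absurd h' h0⟩
  choose c hc hc0 using hdiv
  refine ⟨B.repr.symm (Finsupp.onFinset (B.repr a).support c
    fun i hi => Finsupp.mem_support_iff.mpr fun h0 => hi (hc0 i h0)), ?_⟩
  apply B.repr.injective
  ext i
  simp [hc i]

theorem Submodule.disjoint_torsionBy_of_isSMulRegular {R N : Type*} [CommRing R]
    [AddCommGroup N] [Module R N] {M : Submodule R N} {q : R} (hq : IsSMulRegular M q) :
    Disjoint (torsionBy R N q) M := by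
  rw [disjoint_def]
  intro x hx hxM
  have : q • (⟨x, hxM⟩ : M) = q • 0 := Subtype.ext (by simpa using hx)
  exact congrArg Subtype.val (hq this)

theorem Submodule.finite_of_le_comap_mkQ_of_disjoint {R N : Type*} [CommRing R]
    [AddCommGroup N] [Module R N] {M K : Submodule R N} {S : Submodule R (N ⧸ M)} [Finite S]
    (hKS : K ≤ S.comap M.mkQ) (hKM : Disjoint K M) : Finite K := by
  refine Finite.of_injective (fun x : K => (⟨M.mkQ x, hKS x.2⟩ : S)) fun x y hxy => ?_
  have hxyM : (x : N) - y ∈ M := (Submodule.Quotient.eq M).mp congr(Subtype.val $hxy)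
  have hxyK : (x : N) - y ∈ K := K.sub_mem x.2 y.2
  exact Subtype.ext (sub_eq_zero.mp ((disjoint_def.mp hKM) _ hxyK hxyM))

theorem Submodule.le_of_smul_mem_of_inf_torsionBy_eq_bot {R N : Type*} [CommRing R]
    [AddCommGroup N] [Module R N] {M Y : Submodule R N} [Module.Free R M] {q s : R}
    (hqs : ∀ f : R, q ∣ s * f → q ∣ f) (hMY : M ≤ Y) (hq : ∀ y ∈ Y, q • y ∈ M)
    (hs : ∀ y ∈ Y, s • y ∈ M) (hY : Y ⊓ torsionBy R N q = ⊥) : Y ≤ M := by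
  intro y hy
  obtain ⟨c, hc⟩ := Module.Free.exists_eq_smul_of_smul_eq_smul hqs
    (a := ⟨q • y, hq y hy⟩) (b := ⟨s • y, hs y hy⟩) (Subtype.ext (smul_comm s q y))
  have hyc : y - c ∈ Y ⊓ torsionBy R N q := by
    refine ⟨Y.sub_mem hy (hMY c.2), (mem_torsionBy_iff _ _).mpr ?_⟩
    rw [smul_sub, sub_eq_zero]
    exact congr(Subtype.val $hc)
  rw [hY, mem_bot, sub_eq_zero] at hyc
  exact hyc ▸ c.2

/-- Let `Λ = ℤ_p[[T]]` and let `0 → M → N → N/M → 0` be an exact sequence of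
`Λ`-modules with `M` free and `N` containing no nonzero finite `Λ`-submodule.  Then
`N/M` contains no nonzero finite `Λ`-submodule. -/
theorem quotient_no_finite_submodule (p : ℕ) [Fact p.Prime]
    (N : Type) [AddCommGroup N] [Module (PowerSeries ℤ_[p]) N]
    (M : Submodule (PowerSeries ℤ_[p]) N) [Module.Free (PowerSeries ℤ_[p]) M]
    (hN : ∀ S : Submodule (PowerSeries ℤ_[p]) N, Finite S → S = ⊥) :
    ∀ S : Submodule (PowerSeries ℤ_[p]) (N ⧸ M), Finite S → S = ⊥ := by
  intro S _
  obtain ⟨n, hn⟩ := exists_pow_smul_eq_zero_of_mem_jacobson_bot (W := S)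
    (mem_jacobson_bot_of_not_isUnit_constantCoeff (f := C (p : ℤ_[p]))
      (by simpa using PadicInt.p_nonunit))
  obtain ⟨m, hm⟩ := exists_pow_smul_eq_zero_of_mem_jacobson_bot (W := S)
    (mem_jacobson_bot_of_not_isUnit_constantCoeff (f := (X : PowerSeries ℤ_[p])) (by simp))
  let q := C ((p : ℤ_[p]) ^ n)
  have hq : q ≠ 0 := (map_ne_zero_iff _ C_injective).mpr
    (pow_ne_zero n (Nat.cast_ne_zero.mpr (Fact.out : p.Prime).ne_zero))
  let Y := S.comap M.mkQ
  have hMY : M ≤ Y := (ker_mkQ M).ge.trans (LinearMap.ker_le_comap _)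
  have hqY : ∀ y ∈ Y, q • y ∈ M := fun y hy => by
    simpa [q, ← Submodule.Quotient.mk_eq_zero M] using hn ⟨_, hy⟩
  have hXY : ∀ y ∈ Y, (X : PowerSeries ℤ_[p]) ^ m • y ∈ M := fun y hy => by
    simpa [← Submodule.Quotient.mk_eq_zero M] using hm ⟨_, hy⟩
  have hY : Y ⊓ torsionBy _ N q = ⊥ :=
    hN _ (finite_of_le_comap_mkQ_of_disjoint inf_le_left
      ((disjoint_torsionBy_of_isSMulRegular (IsSMulRegular.of_ne_zero hq)).mono_left inf_le_right))
  have hYM : Y ≤ M := le_of_smul_mem_of_inf_torsionBy_eq_bot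
    (fun _ => C_dvd_of_C_dvd_X_pow_mul) hMY hqY hXY hY
  rw [eq_bot_iff, ← map_comap_eq_of_surjective M.mkQ_surjective S, ← mkQ_map_self M]
  exact map_mono hYM
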